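/- The 5-fold blow-up of the 5-cycle C_5 (the 25-vertex graph obtained by replacing each vertex of C_5 by an independent set of 5 vertices and each edge by a complete bipartite graph between the corresponding sets) is triangle-free and not bipartite, and its complement G satisfies η(G) := ν*(G)/(25·24) = 1/4. -/

import Mathlib

open Finset
open scoped Classical

variable {V : Type*}

/-- A triangle packing of `G`: a finite collection of triangles (3-cliques) of `G` that are
pairwise edge-disjoint (i.e. any two distinct members share at most one vertex). -/
def SimpleGraph.IsTrianglePacking [DecidableEq V] (G : SimpleGraph V)
    (P : Finset (Finset V)) : Prop :=
  (∀ T ∈ P, G.IsNClique 3 T) ∧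
    (P : Set (Finset V)).Pairwise fun S T => (S ∩ T).card ≤ 1

/-- The maximum size (number of edges, i.e. `3 * number of triangles`) of a triangle packing. -/
noncomputable def SimpleGraph.triangleNu [DecidableEq V] (G : SimpleGraph V) : ℕ :=
  sSup {m | ∃ P : Finset (Finset V), G.IsTrianglePacking P ∧ m = 3 * P.card}

/-- A fractional triangle packing of `G`: a weight function on triples of vertices, supported
on triangles of `G`, with values in `[0,1]`, such that every edge carries total weight ≤ 1. -/
def SimpleGraph.IsFracTrianglePacking [Fintype V] [DecidableEq V] (G : SimpleGraph V)
    (w : Finset V → ℝ) : Prop :=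
  (∀ T, 0 ≤ w T ∧ w T ≤ 1) ∧
  (∀ T, ¬ G.IsNClique 3 T → w T = 0) ∧
  ∀ u v : V, G.Adj u v →
    ∑ T ∈ univ.filter (fun T : Finset V => G.IsNClique 3 T ∧ u ∈ T ∧ v ∈ T), w T ≤ 1

/-- `ν*(G)`: the maximum size `3 ∑ w(T)` of a fractional triangle packing of `G`. -/
noncomputable def SimpleGraph.nuStar [Fintype V] [DecidableEq V] (G : SimpleGraph V) : ℝ :=
  sSup {x | ∃ w : Finset V → ℝ, G.IsFracTrianglePacking w ∧ x = 3 * ∑ T : Finset V, w T}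

/-- `η(G) = ν*(G)/(n(n-1))` where `n = |V(G)|`. -/
noncomputable def SimpleGraph.etaPack [Fintype V] [DecidableEq V] (G : SimpleGraph V) : ℝ :=
  G.nuStar / ((Fintype.card V : ℝ) * ((Fintype.card V : ℝ) - 1))

/-- A fractional triangle decomposition: a fractional packing with equality on every edge. -/
def SimpleGraph.IsFracTriangleDecomposition [Fintype V] [DecidableEq V] (G : SimpleGraph V)
    (w : Finset V → ℝ) : Prop :=
  G.IsFracTrianglePacking w ∧
  ∀ u v : V, G.Adj u v →
    ∑ T ∈ univ.filter (fun T : Finset V => G.IsNClique 3 T ∧ u ∈ T ∧ v ∈ T), w T = 1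

/-- `G` is `ε`-far from bipartite: every bipartite subgraph misses at least `ε n²` edges. -/
def FarFromBipartite [Fintype V] [DecidableEq V] (ε : ℝ) (G : SimpleGraph V) : Prop :=
  ∀ H : SimpleGraph V, H ≤ G → H.Colorable 2 →
    ε * (Fintype.card V : ℝ) ^ 2 ≤ (G.edgeFinset.card : ℝ) - (H.edgeFinset.card : ℝ)

/-- The disjoint union of two cliques on `⌈n/2⌉`-ish halves of `Fin n`
(the first `n/2` vertices form one clique, the rest form the other). -/
def twoCliques (n : ℕ) : SimpleGraph (Fin n) where
  Adj u v := u ≠ v ∧ ((u : ℕ) < n / 2 ↔ (v : ℕ) < n / 2)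
  symm := ⟨by intro u v h; exact ⟨h.1.symm, h.2.symm⟩⟩
  loopless := ⟨by intro u h; exact h.1 rfl⟩

/-- `g(n)`: minimum over co-triangle-free `n`-vertex graphs of the max triangle packing size. -/
noncomputable def gInt (n : ℕ) : ℕ :=
  sInf {m | ∃ G : SimpleGraph (Fin n), Gᶜ.CliqueFree 3 ∧ m = G.triangleNu}

/-- `g*(n)`: minimum over co-triangle-free `n`-vertex graphs of `ν*`. -/
noncomputable def gStar (n : ℕ) : ℝ :=
  sInf {x | ∃ G : SimpleGraph (Fin n), Gᶜ.CliqueFree 3 ∧ x = G.nuStar}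


/-- The 5-fold blow-up of the 5-cycle: vertices are `ZMod 5 × Fin 5`, and two vertices are
adjacent iff their first coordinates are consecutive in the cyclic order. -/
def C5Blowup : SimpleGraph (ZMod 5 × Fin 5) where
  Adj u v := u.1 = v.1 + 1 ∨ v.1 = u.1 + 1
  symm := ⟨fun _ _ h => Or.symm h⟩
  loopless := by
    constructor
    intro u h
    rcases h with h | h <;> exact absurd (left_eq_add.mp h) (by decide)

/-!
The complement `G` of the blow-up has two kinds of edges: pairs inside one class, and pairs in
classes at distance 2 on the cycle. The complement of `C₅` is again a 5-cycle, hence triangle-free,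
so every triangle of `G` contains a same-class pair; as there are only 50 such pairs, weak LP
duality bounds the total weight of any fractional packing by 50. Conversely, the 250 triangles made
of two vertices of class `i` and one of class `i + 2` cover each edge of `G` at most 5 times, so
weight `1/5` on each of them is a packing of total weight 50. Hence `ν*(G) = 150 = 25 · 24 / 4`.
-/

namespace SimpleGraph

variable [Fintype V] [DecidableEq V] {G : SimpleGraph V}

theorem IsFracTrianglePacking.sum_le_card {w : Finset V → ℝ} (hw : G.IsFracTrianglePacking w)
    (E : Finset (V × V)) (hE : ∀ e ∈ E, G.Adj e.1 e.2)
    (hcover : ∀ T, G.IsNClique 3 T → ∃ e ∈ E, e.1 ∈ T ∧ e.2 ∈ T) :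
    ∑ T, w T ≤ #E := by
  obtain ⟨hw01, hw0, hload⟩ := hw
  let load (e : V × V) (T : Finset V) : ℝ := if G.IsNClique 3 T ∧ e.1 ∈ T ∧ e.2 ∈ T then w T else 0
  have hnonneg (e : V × V) (T : Finset V) : 0 ≤ load e T := by
    unfold load; split_ifs <;> simp [hw01]
  have hcovered : ∀ T, w T ≤ ∑ e ∈ E, load e T := by
    intro T
    by_cases hT : G.IsNClique 3 T
    · obtain ⟨e, he, he₁, he₂⟩ := hcover T hT
      have : w T = load e T := by simp [load, hT, he₁, he₂]
      rw [this]
      exact single_le_sum (f := (load · T)) (fun e _ => hnonneg e T) he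
    · rw [hw0 T hT]
      exact sum_nonneg fun e _ => hnonneg e T
  calc ∑ T, w T ≤ ∑ T, ∑ e ∈ E, load e T := sum_le_sum fun T _ => hcovered T
    _ = ∑ e ∈ E, ∑ T, load e T := sum_comm
    _ ≤ ∑ e ∈ E, 1 := sum_le_sum fun e he => by
        simpa only [load, ← sum_filter] using hload e.1 e.2 (hE e he)
    _ = #E := by simp

theorem isFracTrianglePacking_indicator (S : Finset (Finset V)) (k : ℕ)
    (hS : ∀ T ∈ S, G.IsNClique 3 T)
    (hk : ∀ u v, G.Adj u v → #{T ∈ S | u ∈ T ∧ v ∈ T} ≤ k) :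
    G.IsFracTrianglePacking fun T => if T ∈ S then (k : ℝ)⁻¹ else 0 := by
  refine ⟨fun T => ?_, fun T hT => if_neg fun hTS => hT (hS T hTS), fun u v huv => ?_⟩
  · dsimp only
    split_ifs
    · exact ⟨by positivity, Nat.cast_inv_le_one k⟩
    · simp
  · rw [← sum_filter, sum_const, nsmul_eq_mul]
    have hsub : ({T ∈ {T | G.IsNClique 3 T ∧ u ∈ T ∧ v ∈ T} | T ∈ S} : Finset (Finset V)) ⊆
        {T ∈ S | u ∈ T ∧ v ∈ T} :=
      fun T hT => by simp only [mem_filter] at hT ⊢; exact ⟨hT.2, hT.1.2.2⟩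
    calc _ ≤ (k : ℝ) * (k : ℝ)⁻¹ := by
          gcongr
          exact_mod_cast (card_le_card hsub).trans (hk u v huv)
      _ ≤ 1 := by
          rcases k.eq_zero_or_pos with rfl | hk
          · simp
          · rw [mul_inv_cancel₀ (by positivity)]

theorem nuStar_eq_of_forall_le {w₀ : Finset V → ℝ} (hw₀ : G.IsFracTrianglePacking w₀)
    (hmax : ∀ w, G.IsFracTrianglePacking w → ∑ T, w T ≤ ∑ T, w₀ T) :
    G.nuStar = 3 * ∑ T, w₀ T :=
  IsGreatest.csSup_eq ⟨⟨w₀, hw₀, rfl⟩, by rintro _ ⟨w, hw, rfl⟩; linarith [hmax w hw]⟩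

end SimpleGraph

namespace C5Blowup

theorem adj_iff {u v : ZMod 5 × Fin 5} : C5Blowup.Adj u v ↔ u.1 = v.1 + 1 ∨ v.1 = u.1 + 1 :=
  Iff.rfl

theorem cliqueFree_three : C5Blowup.CliqueFree 3 := by
  intro T hT
  obtain ⟨x, y, z, hxy, hxz, hyz, rfl⟩ := card_eq_three.mp hT.card_eq
  have hC5 : ∀ p q r : ZMod 5, (p = q + 1 ∨ q = p + 1) → (q = r + 1 ∨ r = q + 1) →
      ¬(p = r + 1 ∨ r = p + 1) := by decide
  exact hC5 x.1 y.1 z.1 (hT.isClique (by simp) (by simp) hxy)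
    (hT.isClique (by simp) (by simp) hyz) (hT.isClique (by simp) (by simp) hxz)

def cycleGraphHom : SimpleGraph.cycleGraph 5 →g C5Blowup where
  toFun i := (i, 0)
  map_rel' {i j} h := by
    rw [SimpleGraph.cycleGraph_adj, sub_eq_iff_eq_add, sub_eq_iff_eq_add] at h
    exact h.imp (·.trans (add_comm _ _)) (·.trans (add_comm _ _))

theorem not_colorable_two : ¬C5Blowup.Colorable 2 := fun h => by
  have := (h.of_hom cycleGraphHom).chromaticNumber_le
  rw [SimpleGraph.chromaticNumber_cycleGraph_of_odd 5 (by norm_num) (by decide)] at this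
  norm_num at this

abbrev Index := ZMod 5 × Fin 5 × Fin 5 × Fin 5

def triangle (p : Index) : Finset (ZMod 5 × Fin 5) :=
  {(p.1, p.2.1), (p.1, p.2.2.1), (p.1 + 2, p.2.2.2)}

def triangles : Finset (Finset (ZMod 5 × Fin 5)) :=
  ({p : Index | p.2.1 < p.2.2.1} : Finset Index).image triangle

theorem triangle_isNClique {p : Index} (hp : p.2.1 < p.2.2.1) :
    C5Blowupᶜ.IsNClique 3 (triangle p) := by
  obtain ⟨i, a, b, c⟩ := p
  have hi : ∀ i : ZMod 5, i ≠ i + 1 ∧ i + 1 ≠ i ∧ i ≠ i + 2 + 1 ∧ i + 2 ≠ i + 1 ∧ i ≠ i + 2 := by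
    decide
  simp [triangle, SimpleGraph.is3Clique_triple_iff, adj_iff, (show a < b from hp).ne, hi]

theorem triangle_injOn : Set.InjOn triangle {p : Index | p.2.1 < p.2.2.1} := by
  rintro ⟨i, a, b, c⟩ (hp : a < b) ⟨j, d, e, f⟩ (hq : d < e) h
  have hi : ∀ i j : ZMod 5, i ≠ i + 2 ∧ (i = j + 2 → j ≠ i + 2) := by decide
  simp only [triangle, Finset.ext_iff, mem_insert, mem_singleton, Prod.ext_iff] at h
  have h1 := h (i, a); have h2 := h (i, b); have h3 := h (i + 2, c)
  simp only [true_and, and_true] at h1 h2 h3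
  grind

set_option maxRecDepth 10000 in
theorem card_triangles : #triangles = 250 := by
  rw [triangles, card_image_of_injOn (by simpa using triangle_injOn)]
  decide

def thirdClass (u v : ZMod 5 × Fin 5) : ZMod 5 :=
  if u.1 = v.1 then u.1 + 2 else if u.1 = v.1 + 2 then v.1 else u.1

theorem triangle_eq_insert_thirdClass (p : Index) {u v : ZMod 5 × Fin 5} (huv : u ≠ v)
    (hu : u ∈ triangle p) (hv : v ∈ triangle p) : ∃ c, triangle p = {u, v, (thirdClass u v, c)} := by
  obtain ⟨i, a, b, c⟩ := p
  have hi : ∀ j : ZMod 5, j ≠ j + 2 ∧ j ≠ j + 2 + 2 := by decide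
  simp only [triangle, mem_insert, mem_singleton] at hu hv
  rcases hu with rfl | rfl | rfl <;> rcases hv with rfl | rfl | rfl <;>
    first
      | exact absurd rfl huv
      | (refine ⟨a, ?_⟩; ext; grind [triangle, thirdClass, hi i])
      | (refine ⟨b, ?_⟩; ext; grind [triangle, thirdClass, hi i])
      | (refine ⟨c, ?_⟩; ext; grind [triangle, thirdClass, hi i])

theorem card_filter_triangles_le {u v : ZMod 5 × Fin 5} (huv : u ≠ v) :
    #{T ∈ triangles | u ∈ T ∧ v ∈ T} ≤ 5 := by
  have hsub : {T ∈ triangles | u ∈ T ∧ v ∈ T} ⊆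
      univ.image fun c : Fin 5 => ({u, v, (thirdClass u v, c)} : Finset _) := by
    intro T hT
    obtain ⟨hT, hu, hv⟩ := mem_filter.mp hT
    obtain ⟨p, -, rfl⟩ := mem_image.mp hT
    obtain ⟨c, hc⟩ := triangle_eq_insert_thirdClass p huv hu hv
    exact mem_image.mpr ⟨c, mem_univ c, hc.symm⟩
  exact (card_le_card hsub).trans (card_image_le.trans (by simp))

def sameClassPairs : Finset ((ZMod 5 × Fin 5) × (ZMod 5 × Fin 5)) :=
  {e | e.1.1 = e.2.1 ∧ e.1.2 < e.2.2}

set_option maxRecDepth 10000 in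
theorem card_sameClassPairs : #sameClassPairs = 50 := by
  decide

theorem compl_adj_of_mem_sameClassPairs {e} (he : e ∈ sameClassPairs) :
    C5Blowupᶜ.Adj e.1 e.2 := by
  obtain ⟨hclass, hlt⟩ : e.1.1 = e.2.1 ∧ e.1.2 < e.2.2 := by simpa [sameClassPairs] using he
  have hi : ∀ i : ZMod 5, i ≠ i + 1 := by decide
  refine ⟨fun h => hlt.ne (congrArg Prod.snd h), ?_⟩
  simp [adj_iff, hclass, hi]

theorem exists_sameClassPairs_of_isNClique {T : Finset (ZMod 5 × Fin 5)}
    (hT : C5Blowupᶜ.IsNClique 3 T) : ∃ e ∈ sameClassPairs, e.1 ∈ T ∧ e.2 ∈ T := by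
  obtain ⟨x, y, z, hxy, hxz, hyz, rfl⟩ := card_eq_three.mp hT.card_eq
  have hpentagram : ∀ p q r : ZMod 5, ¬(p = q + 1 ∨ q = p + 1) → ¬(q = r + 1 ∨ r = q + 1) →
      ¬(p = r + 1 ∨ r = p + 1) → p = q ∨ q = r ∨ p = r := by decide
  have hpair : ∀ u ∈ ({x, y, z} : Finset _), ∀ v ∈ ({x, y, z} : Finset _), u ≠ v → u.1 = v.1 →
      ∃ e ∈ sameClassPairs, e.1 ∈ ({x, y, z} : Finset _) ∧ e.2 ∈ ({x, y, z} : Finset _) := by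
    intro u hu v hv huv hclass
    rcases lt_or_gt_of_ne fun h => huv (Prod.ext hclass h) with h | h
    · exact ⟨(u, v), by simp [sameClassPairs, hclass, h], hu, hv⟩
    · exact ⟨(v, u), by simp [sameClassPairs, hclass, h], hv, hu⟩
  have hadj {u v} (hu : u ∈ ({x, y, z} : Finset _)) (hv : v ∈ ({x, y, z} : Finset _))
      (huv : u ≠ v) : ¬(u.1 = v.1 + 1 ∨ v.1 = u.1 + 1) := (hT.isClique hu hv huv).2
  rcases hpentagram x.1 y.1 z.1 (hadj (by simp) (by simp) hxy) (hadj (by simp) (by simp) hyz)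
      (hadj (by simp) (by simp) hxz) with h | h | h
  · exact hpair x (by simp) y (by simp) hxy h
  · exact hpair y (by simp) z (by simp) hyz h
  · exact hpair x (by simp) z (by simp) hxz h

theorem nuStar_compl : C5Blowupᶜ.nuStar = 150 := by
  have hw₀ := SimpleGraph.isFracTrianglePacking_indicator (G := C5Blowupᶜ) triangles 5
    (fun T hT => by
      obtain ⟨p, hp, rfl⟩ := mem_image.mp hT
      exact triangle_isNClique (mem_filter.mp hp).2)
    fun u v huv => card_filter_triangles_le huv.ne
  have hsum : ∑ T, (if T ∈ triangles then ((5 : ℕ) : ℝ)⁻¹ else 0) = 50 := by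
    rw [sum_ite_mem, univ_inter, sum_const, card_triangles]
    norm_num
  rw [SimpleGraph.nuStar_eq_of_forall_le hw₀ fun w hw => ?_, hsum]
  · norm_num
  · rw [hsum]
    exact (hw.sum_le_card sameClassPairs (fun e he => compl_adj_of_mem_sameClassPairs he)
      fun T hT => exists_sameClassPairs_of_isNClique hT).trans (by simp [card_sameClassPairs])

end C5Blowup

/-- the 5-fold blow-up of `C₅` is triangle-free and non-bipartite, and its
complement `G` satisfies `η(G) = ν*(G)/(25·24) = 1/4`. -/
theorem stmt16 :
    C5Blowup.CliqueFree 3 ∧ ¬ C5Blowup.Colorable 2 ∧ (C5Blowupᶜ).etaPack = 1 / 4 := by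
  refine ⟨C5Blowup.cliqueFree_three, C5Blowup.not_colorable_two, ?_⟩
  rw [SimpleGraph.etaPack, C5Blowup.nuStar_compl]
  simp only [Fintype.card_prod, ZMod.card, Fintype.card_fin]
  norm_num
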